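/- arXiv:0803.2542 — 2 statements merged into one kernel-verified Lean document; each statement's English description precedes it below -/
import Mathlib

section
/- An abelian group that is the (internal) sum of a family of upper-finite subgroups is itself upper-finite. -/
/-!
Let `Q = A ⧸ N` be finitely generated. Subgroups of a finitely generated abelian group are
finitely generated, so the image of each `s i` in `Q` is a finitely generated quotient of the
upper-finite group `s i`, hence finite, hence torsion. These images generate `Q`, so `Q` is a
finitely generated torsion abelian group, i.e. finite.
-/

/-- An abelian group is upper-finite if every finitely generated quotient of it is finite. -/
def AddUpperFinite (A : Type*) [AddCommGroup A] : Prop :=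
  ∀ N : AddSubgroup A, AddGroup.FG (A ⧸ N) → Finite (A ⧸ N)

open Function

instance AddSubgroup.addGroupFG {G : Type*} [AddCommGroup G] [AddGroup.FG G]
    (H : AddSubgroup G) : AddGroup.FG H := by
  have : Module.Finite ℤ G := Module.Finite.iff_addGroup_fg.mpr inferInstance
  exact Module.Finite.iff_addGroup_fg.mp (inferInstanceAs (Module.Finite ℤ H.toIntSubmodule))

namespace AddUpperFinite

variable {A B : Type*} [AddCommGroup A] [AddCommGroup B]

theorem finite_of_surjective (hA : AddUpperFinite A) [AddGroup.FG B] {f : A →+ B}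
    (hf : Surjective f) : Finite B :=
  let e := QuotientAddGroup.quotientKerEquivOfSurjective f hf
  have : AddGroup.FG (A ⧸ f.ker) :=
    AddGroup.fg_of_surjective (f := e.symm.toAddMonoidHom) e.symm.surjective
  have := hA f.ker this
  .of_equiv _ e.toEquiv

theorem isOfFinAddOrder_apply (hA : AddUpperFinite A) [AddGroup.FG B] (f : A →+ B) (a : A) :
    IsOfFinAddOrder (f a) := by
  have : Finite f.range := hA.finite_of_surjective f.rangeRestrict_surjective
  exact f.range.subtype.isOfFinAddOrder (isOfFinAddOrder_of_finite (f.rangeRestrict a))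

end AddUpperFinite

/-- an abelian group that is the sum of a family of upper-finite subgroups
is itself upper-finite. -/
theorem stmt_9 (A : Type) [AddCommGroup A] {ι : Type} (s : ι → AddSubgroup A)
    (hsum : (⨆ i, s i) = ⊤) (hup : ∀ i, AddUpperFinite (s i)) :
    AddUpperFinite A := by
  intro N hN
  refine AddCommGroup.finite_of_fg_isAddTorsion _ fun x => ?_
  have himage : ∀ i, (s i).map (QuotientAddGroup.mk' N) ≤ AddCommGroup.torsion (A ⧸ N) := by
    rintro i _ ⟨a, ha, rfl⟩
    exact (hup i).isOfFinAddOrder_apply ((QuotientAddGroup.mk' N).comp (s i).subtype) ⟨a, ha⟩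
  have htop : (⊤ : AddSubgroup (A ⧸ N)) ≤ AddCommGroup.torsion (A ⧸ N) := by
    rw [← AddSubgroup.map_top_of_surjective _ (QuotientAddGroup.mk'_surjective N), ← hsum,
      AddSubgroup.map_iSup]
    exact iSup_le himage
  exact htop (AddSubgroup.mem_top x)
end

section
/- Let G be a nilpotent group, K a normal subgroup of G that is upper-finite, and suppose K' is upper-finite. Then [K, G] is upper-finite. -/
/-- A group is upper-finite if every finitely generated quotient of it is finite. -/
def UpperFinite (G : Type*) [Group G] : Prop :=
  ∀ (N : Subgroup G) [N.Normal], Group.FG (G ⧸ N) → Finite (G ⧸ N)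

/-!
Modulo `K' = [K, K]` the image `A` of `K` is an abelian normal subgroup, and for such an `A`
each map `a ↦ [a, g]` is a homomorphism `A → [A, G]`; their images generate the abelian group
`[A, G]`. An abelian group generated by upper-finite subgroups is upper-finite: in a finitely
generated quotient the images of these subgroups are finitely generated (as subgroups of a finitely
generated abelian group), hence finite, so the quotient is a finitely generated torsion abelian
group. Thus `[K, G]/K'` is upper-finite, and so is `K'`. Upper-finiteness is closed under
extensions: the image `T` of `N` in a finitely generated quotient `Q` of `G` has finite index,
since `Q/T` is a finitely generated quotient of `G/N`; so `T` is finitely generated by Schreier's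
lemma, hence finite as a quotient of `N`.
-/

open QuotientGroup
open scoped commutatorElement

theorem Subgroup.fg_of_commGroup {Q : Type*} [CommGroup Q] [Group.FG Q] (S : Subgroup Q) :
    Group.FG S := by
  have : Module.Finite ℤ (Additive Q) := Module.Finite.iff_addGroup_fg.mpr inferInstance
  have : IsNoetherian ℤ (Additive Q) := isNoetherian_of_isNoetherianRing_of_finite ℤ _
  have hS : (AddSubgroup.toIntSubmodule S.toAddSubgroup).FG := IsNoetherian.noetherian _
  exact (Group.fg_iff_subgroup_fg S).mpr <|
    (Subgroup.fg_iff_add_fg S).mpr <| (Submodule.fg_iff_addSubgroup_fg _).mp hS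

namespace UpperFinite

variable {G H : Type*} [Group G] [Group H]

theorem finite_of_surjective (hG : UpperFinite G) (f : G →* H) (hf : Function.Surjective f)
    [Group.FG H] : Finite H :=
  let e := quotientKerEquivOfSurjective f hf
  have : Group.FG (G ⧸ f.ker) :=
    Group.fg_of_surjective (f := e.symm.toMonoidHom) e.symm.surjective
  have := hG f.ker this
  Finite.of_equiv _ e.toEquiv

theorem of_surjective (hG : UpperFinite G) (f : G →* H) (hf : Function.Surjective f) :
    UpperFinite H := fun N _ _ =>
  hG.finite_of_surjective ((mk' N).comp f) ((mk'_surjective N).comp hf)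

theorem of_mulEquiv (hG : UpperFinite G) (e : G ≃* H) : UpperFinite H :=
  hG.of_surjective e.toMonoidHom e.surjective

theorem of_normal_of_quotient {N : Subgroup G} [N.Normal] (hN : UpperFinite N)
    (hQ : UpperFinite (G ⧸ N)) : UpperFinite G := by
  intro M _ _
  set p := mk' M
  set T := N.map p
  have : T.Normal := Subgroup.Normal.map ‹_› p (mk'_surjective M)
  have : Finite ((G ⧸ M) ⧸ T) :=
    hQ.finite_of_surjective (map N T p (Subgroup.le_comap_map p N))
      (map_surjective_of_surjective _ _ _ ((mk'_surjective T).comp (mk'_surjective M)) _)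
  have : T.FiniteIndex := Subgroup.finiteIndex_of_finite_quotient
  have : Finite T := hN.finite_of_surjective (p.subgroupMap N) (p.subgroupMap_surjective N)
  exact Finite.of_subgroup_quotient T

end UpperFinite

theorem UpperFinite.isOfFinOrder_apply {A Q : Type*} [Group A] [CommGroup Q] [Group.FG Q]
    (hA : UpperFinite A) (f : A →* Q) (a : A) : IsOfFinOrder (f a) :=
  have := f.range.fg_of_commGroup
  have := hA.finite_of_surjective f.rangeRestrict f.rangeRestrict_surjective
  f.range.subtype.isOfFinOrder (isOfFinOrder_of_finite (f.rangeRestrict a))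

theorem UpperFinite.of_iSup_eq_top {Q ι : Type*} [CommGroup Q] {S : ι → Subgroup Q}
    (hS : ∀ i, UpperFinite (S i)) (hsup : ⨆ i, S i = ⊤) : UpperFinite Q := by
  intro N _ _
  have hle : ∀ i, (S i).map (mk' N) ≤ CommGroup.torsion (Q ⧸ N) := by
    rintro i _ ⟨x, hx, rfl⟩
    exact (hS i).isOfFinOrder_apply ((mk' N).comp (S i).subtype) ⟨x, hx⟩
  have htop : CommGroup.torsion (Q ⧸ N) = ⊤ := by
    rw [eq_top_iff, ← Subgroup.map_top_of_surjective _ (mk'_surjective N), ← hsup,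
      Subgroup.map_iSup]
    exact iSup_le hle
  exact CommGroup.finite_of_fg_isMulTorsion _ fun x => (Subgroup.eq_top_iff' _).mp htop x

namespace Subgroup

variable {G : Type*} [Group G] (A : Subgroup G) [A.Normal] [IsMulCommutative A]

def commutatorElementHom (g : G) : A →* ↥⁅A, (⊤ : Subgroup G)⁆ where
  toFun a := ⟨⁅(a : G), g⁆, commutator_mem_commutator a.2 (mem_top g)⟩
  map_one' := by ext; simp
  map_mul' a b := by
    have hmem (c : A) : ⁅(c : G), g⁆ ∈ A :=
      commutator_le_left A ⊤ (commutator_mem_commutator c.2 (mem_top g))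
    ext
    calc ⁅(a : G) * b, g⁆ = a * ⁅(b : G), g⁆ * (a : G)⁻¹ * ⁅(a : G), g⁆ := by
          simp only [commutatorElement_def]; group
      _ = ⁅(b : G), g⁆ * ⁅(a : G), g⁆ := by
          rw [setLike_mul_comm a.2 (hmem b), mul_inv_cancel_right]
      _ = ⁅(a : G), g⁆ * ⁅(b : G), g⁆ := setLike_mul_comm (hmem b) (hmem a)

theorem iSup_range_commutatorElementHom :
    ⨆ g, (A.commutatorElementHom g).range = ⊤ := by
  have hle :
      ⁅A, ⊤⁆ ≤ (⨆ g, (A.commutatorElementHom g).range).map (⁅A, ⊤⁆ : Subgroup G).subtype :=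
    commutator_le.mpr fun a ha g _ =>
      ⟨A.commutatorElementHom g ⟨a, ha⟩, mem_iSup_of_mem g ⟨_, rfl⟩, rfl⟩
  rw [eq_top_iff]
  rintro ⟨x, hx⟩ -
  obtain ⟨y, hy, rfl⟩ := hle hx
  exact hy

end Subgroup

open scoped IsMulCommutative in
theorem UpperFinite.commutator_top_of_isMulCommutative {G : Type*} [Group G] {A : Subgroup G}
    [A.Normal] [IsMulCommutative A] (hA : UpperFinite A) :
    UpperFinite ↥⁅A, (⊤ : Subgroup G)⁆ := by
  have hle := Subgroup.commutator_le_left A ⊤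
  have : IsMulCommutative ↥⁅A, (⊤ : Subgroup G)⁆ := Subgroup.commutator_self_eq_bot_iff.mp <|
    eq_bot_mono (Subgroup.commutator_mono hle hle) (Subgroup.commutator_self_eq_bot_iff.mpr ‹_›)
  exact UpperFinite.of_iSup_eq_top
    (fun g => hA.of_surjective _ (A.commutatorElementHom g).rangeRestrict_surjective)
    A.iSup_range_commutatorElementHom

theorem stmt_14_general (G : Type) [Group G]
    (K : Subgroup G) [K.Normal] (hK : UpperFinite K)
    (hK' : UpperFinite (commutator K)) :
    UpperFinite ↥(⁅K, (⊤ : Subgroup G)⁆) := by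
  set π := mk' ⁅K, K⁆
  set f := π.comp (⁅K, ⊤⁆ : Subgroup G).subtype
  have hker : f.ker ≃* commutator K :=
    (MulEquiv.subgroupCongr (by rw [← MonoidHom.comap_ker, ker_mk']; rfl)).trans <|
    (Subgroup.subgroupOfEquivOfLe (Subgroup.commutator_mono le_rfl le_top)).trans <|
      (MulEquiv.subgroupCongr K.map_subtype_commutator).symm.trans
        (Subgroup.equivMapOfInjective _ _ K.subtype_injective).symm
  have hrange : f.range = ⁅K.map π, ⊤⁆ := by
    rw [MonoidHom.range_comp, Subgroup.range_subtype, Subgroup.map_commutator,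
      Subgroup.map_top_of_surjective _ (mk'_surjective _)]
  have : IsMulCommutative (K.map π) := Subgroup.commutator_self_eq_bot_iff.mp <| by
    rw [← Subgroup.map_commutator, Subgroup.map_eq_bot_iff, ker_mk']
  have hKπ : UpperFinite (K.map π) := hK.of_surjective _ (π.subgroupMap_surjective K)
  refine UpperFinite.of_normal_of_quotient (N := f.ker) (hK'.of_mulEquiv hker.symm) ?_
  exact hKπ.commutator_top_of_isMulCommutative.of_mulEquiv
    ((MulEquiv.subgroupCongr hrange).symm.trans (quotientKerEquivRange f).symm)

/-- if `K` is an upper-finite normal subgroup of a nilpotent group `G`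
and `K' = [K,K]` is upper-finite, then `[K,G]` is upper-finite. -/
theorem stmt_14 (G : Type) [Group G] (hnil : Group.IsNilpotent G)
    (K : Subgroup G) [K.Normal] (hK : UpperFinite K)
    (hK' : UpperFinite (commutator K)) :
    UpperFinite ↥(⁅K, (⊤ : Subgroup G)⁆) :=
  stmt_14_general G K hK hK'
end
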